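/- Let X be a Polish metric space and ā, b̄ tuples of the same finite length n. If ā ≡_α b̄ for every countable ordinal α, then there exists a surjective isometry of X mapping ā onto b̄. -/

import Mathlib

/-- The back-and-forth hierarchy `≡_α` on equal-length tuples of a metric space:
`≡₀` is "partial isometry", successor stages are the back-and-forth extension
condition, limit stages are intersections. -/
noncomputable def BF {X : Type} [MetricSpace X] (α : Ordinal) :
    ∀ n : ℕ, (Fin n → X) → (Fin n → X) → Prop :=
  Ordinal.limitRecOn α
    (fun _ a b => ∀ i j, dist (a i) (a j) = dist (b i) (b j))
    (fun _ ih n a b =>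
      (∀ x : X, ∃ y : X, ih (n + 1) (Fin.snoc a x) (Fin.snoc b y)) ∧
      (∀ y : X, ∃ x : X, ih (n + 1) (Fin.snoc a x) (Fin.snoc b y)))
    (fun _ _ ih n a b => ∀ β hβ, ih β hβ n a b)

/-!
No single pair of witnesses serves all countable levels at once, so the back-and-forth is run
on uncountably many levels in parallel: a stage holds, for each level `γ` of an uncountable set
of countable ordinals, extensions of `ā, b̄` that are `≡_γ`. A new point is added on one side
by using `≡_δ` for a larger level `δ` of the set, which implies `≡_(γ+1)`. Separability and the
pigeonhole principle then shrink the set to an uncountable one on which all the tuples are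
`1/(k+1)`-close. Adding the points of a dense sequence alternately on both sides, the tuples of
successive stages converge coordinatewise to two dense sequences with the same mutual distances,
and these extend to the required surjective isometry.
-/

open Set Filter Topology Cardinal TopologicalSpace

universe u

section BackAndForth

variable {X : Type} [MetricSpace X] {n : ℕ} {a b : Fin n → X}

theorem BF_zero_iff : BF 0 n a b ↔ ∀ i j, dist (a i) (a j) = dist (b i) (b j) := by
  rw [BF, Ordinal.limitRecOn_zero]

theorem BF_add_one_iff {α : Ordinal} :
    BF (α + 1) n a b ↔
      (∀ x, ∃ y, BF α (n + 1) (Fin.snoc a x) (Fin.snoc b y)) ∧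
      (∀ y, ∃ x, BF α (n + 1) (Fin.snoc a x) (Fin.snoc b y)) := by
  rw [BF, Ordinal.limitRecOn_add_one]
  rfl

theorem BF_limit_iff {o : Ordinal} (ho : Order.IsSuccLimit o) :
    BF o n a b ↔ ∀ β < o, BF β n a b := by
  rw [BF, Ordinal.limitRecOn_limit _ _ _ _ ho]
  rfl

theorem BF.of_add_one {α : Ordinal} (h : BF (α + 1) n a b) : BF α n a b := by
  induction α using Ordinal.limitRecOn generalizing n with
  | zero =>
    refine BF_zero_iff.2 fun i j => ?_
    obtain ⟨y, hy⟩ := (BF_add_one_iff.1 h).1 (a i)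
    simpa using BF_zero_iff.1 hy i.castSucc j.castSucc
  | add_one α ih =>
    rw [BF_add_one_iff] at h ⊢
    exact ⟨fun x => (h.1 x).imp fun _ => ih, fun y => (h.2 y).imp fun _ => ih⟩
  | limit o ho ih =>
    rw [BF_add_one_iff] at h
    refine (BF_limit_iff ho).2 fun β hβ => ih β hβ (BF_add_one_iff.2 ⟨fun x => ?_, fun y => ?_⟩)
    · exact (h.1 x).imp fun _ hy => (BF_limit_iff ho).1 hy β hβ
    · exact (h.2 y).imp fun _ hx => (BF_limit_iff ho).1 hx β hβ

theorem BF.mono {α β : Ordinal} (h : BF α n a b) (hβα : β ≤ α) : BF β n a b := by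
  induction α using Ordinal.limitRecOn generalizing β with
  | zero => rwa [nonpos_iff_eq_zero.1 hβα]
  | add_one α ih =>
    rcases Order.le_succ_iff_eq_or_le.1 (Order.succ_eq_add_one α ▸ hβα) with rfl | hβα
    · rwa [Order.succ_eq_add_one]
    · exact ih h.of_add_one hβα
  | limit o ho _ =>
    rcases hβα.eq_or_lt with rfl | hβo
    · exact h
    · exact (BF_limit_iff ho).1 h β hβo

theorem BF.symm {α : Ordinal} (h : BF α n a b) : BF α n b a := by
  induction α using Ordinal.limitRecOn generalizing n with
  | zero => exact BF_zero_iff.2 fun i j => (BF_zero_iff.1 h i j).symm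
  | add_one α ih =>
    rw [BF_add_one_iff] at h ⊢
    exact ⟨fun x => (h.2 x).imp fun _ => ih, fun y => (h.1 y).imp fun _ => ih⟩
  | limit o ho ih =>
    exact (BF_limit_iff ho).2 fun β hβ => ih β hβ ((BF_limit_iff ho).1 h β hβ)

theorem BF.dist_eq {α : Ordinal} (h : BF α n a b) (i j : Fin n) :
    dist (a i) (a j) = dist (b i) (b j) :=
  BF_zero_iff.1 (h.mono zero_le) i j

end BackAndForth

theorem countable_Iic_of_lt_ord_aleph_one {γ : Ordinal.{u}} (hγ : γ < ord ℵ₁) :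
    (Iic γ).Countable := by
  rw [← Order.Iio_succ, ← le_aleph0_iff_set_countable, mk_Iio_ordinal, lift_le_aleph0,
    ← lt_aleph_one_iff, ← lt_ord]
  exact (isSuccLimit_ord (aleph0_le_aleph 1)).succ_lt hγ

theorem not_countable_Iio_ord_aleph_one : ¬ (Iio (ord ℵ₁ : Ordinal.{u})).Countable := by
  rw [← le_aleph0_iff_set_countable, mk_Iio_ordinal, card_ord, lift_le_aleph0, not_le]
  exact aleph0_lt_aleph_one

theorem exists_gt_of_not_countable {A : Set Ordinal.{u}} (hA : ¬ A.Countable)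
    {γ : Ordinal.{u}} (hγ : γ < ord ℵ₁) : ∃ δ ∈ A, γ < δ := by
  by_contra! h
  exact hA ((countable_Iic_of_lt_ord_aleph_one hγ).mono h)

theorem exists_not_countable_subset_dist_le {ι Y : Type*} [PseudoMetricSpace Y]
    [SeparableSpace Y] (g : ι → Y) {s : Set ι} (hs : ¬ s.Countable) {ε : ℝ} (hε : 0 < ε) :
    ∃ t ⊆ s, ¬ t.Countable ∧ ∀ i ∈ t, ∀ j ∈ t, dist (g i) (g j) ≤ ε := by
  obtain ⟨D, hDc, hD⟩ := exists_countable_dense Y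
  have hcover : s ⊆ ⋃ y ∈ D, s ∩ g ⁻¹' Metric.ball y (ε / 2) := fun i hi => by
    obtain ⟨y, hyD, hy⟩ := hD.exists_dist_lt (g i) (half_pos hε)
    exact mem_biUnion hyD ⟨hi, by rwa [mem_preimage, Metric.mem_ball]⟩
  obtain ⟨y, -, hy⟩ : ∃ y ∈ D, ¬ (s ∩ g ⁻¹' Metric.ball y (ε / 2)).Countable := by
    by_contra! h
    exact hs ((hDc.biUnion h).mono hcover)
  refine ⟨_, inter_subset_left, hy, fun i hi j hj => ?_⟩
  have hi' := Metric.mem_ball.1 hi.2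
  have hj' := Metric.mem_ball.1 hj.2
  linarith [dist_triangle_right (g i) (g j) y]

theorem restrict_comp_update_eq_snoc {α β : Type*} (f : α → β) (s : ℕ → α) (m : ℕ) (z : α) :
    (fun i : Fin (m + 1) => f (Function.update s m z i)) =
      Fin.snoc (fun i : Fin m => f (s i)) (f z) := by
  funext i
  induction i using Fin.lastCases with
  | last => simp
  | cast i => simp [Fin.snoc_castSucc, Function.update_of_ne i.is_lt.ne]

/-- The pair of tuples at level `γ` is stored as one sequence `e γ` in `X × X`, whose
coordinates from `len` on are ignored. -/
structure Stage (X : Type) [MetricSpace X] where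
  len : ℕ
  A : Set Ordinal.{u}
  e : Ordinal.{u} → ℕ → X × X
  lt_of_mem : ∀ γ ∈ A, γ < ord ℵ₁
  not_countable : ¬ A.Countable
  bf : ∀ γ ∈ A, BF γ len (fun i => (e γ i).1) (fun i => (e γ i).2)

namespace Stage

variable {X : Type} [MetricSpace X]

theorem nonempty (S : Stage.{u} X) : S.A.Nonempty :=
  nonempty_iff_ne_empty.2 fun h => S.not_countable (h ▸ countable_empty)

def swap (S : Stage.{u} X) : Stage.{u} X where
  len := S.len
  A := S.A
  e γ ℓ := (S.e γ ℓ).swap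
  lt_of_mem := S.lt_of_mem
  not_countable := S.not_countable
  bf γ hγ := (S.bf γ hγ).symm

def IsSmall (S : Stage.{u} X) (ε : ℝ) : Prop :=
  ∀ γ ∈ S.A, ∀ γ' ∈ S.A, ∀ ℓ < S.len, dist (S.e γ ℓ) (S.e γ' ℓ) ≤ ε

structure Refines (T S : Stage.{u} X) : Prop where
  len_le : S.len ≤ T.len
  exists_eq : ∀ γ ∈ T.A, ∃ β ∈ S.A, ∀ ℓ < S.len, T.e γ ℓ = S.e β ℓ

theorem Refines.refl (S : Stage.{u} X) : S.Refines S :=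
  ⟨le_rfl, fun γ hγ => ⟨γ, hγ, fun _ _ => rfl⟩⟩

theorem Refines.trans {R T S : Stage.{u} X} (hRT : R.Refines T) (hTS : T.Refines S) :
    R.Refines S := by
  refine ⟨hTS.len_le.trans hRT.len_le, fun γ hγ => ?_⟩
  obtain ⟨β, hβ, hRβ⟩ := hRT.exists_eq γ hγ
  obtain ⟨δ, hδ, hTδ⟩ := hTS.exists_eq β hβ
  exact ⟨δ, hδ, fun ℓ hℓ => (hRβ ℓ (hℓ.trans_le hTS.len_le)).trans (hTδ ℓ hℓ)⟩

theorem Refines.swap {T S : Stage.{u} X} (h : T.Refines S) : T.swap.Refines S.swap :=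
  ⟨h.len_le, fun γ hγ => (h.exists_eq γ hγ).imp fun _ ⟨hβ, heq⟩ =>
    ⟨hβ, fun ℓ hℓ => congrArg Prod.swap (heq ℓ hℓ)⟩⟩

theorem Refines.mem_of_forall_mem {T S : Stage.{u} X} (h : T.Refines S) {F : Set (X × X)}
    {ℓ : ℕ} (hℓ : ℓ < S.len) (hF : ∀ β ∈ S.A, S.e β ℓ ∈ F) : ∀ γ ∈ T.A, T.e γ ℓ ∈ F := by
  intro γ hγ
  obtain ⟨β, hβ, heq⟩ := h.exists_eq γ hγ
  exact heq ℓ hℓ ▸ hF β hβ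

theorem exists_refines_fst (S : Stage.{u} X) (x : X) :
    ∃ T : Stage.{u} X, T.Refines S ∧ T.len = S.len + 1 ∧ ∀ γ ∈ T.A, (T.e γ S.len).1 = x := by
  have hext : ∀ γ ∈ S.A, ∃ δ ∈ S.A, ∃ y : X, BF γ (S.len + 1)
      (Fin.snoc (fun i => (S.e δ i).1) x) (Fin.snoc (fun i => (S.e δ i).2) y) := by
    intro γ hγ
    obtain ⟨δ, hδ, hγδ⟩ := exists_gt_of_not_countable S.not_countable (S.lt_of_mem γ hγ)
    exact ⟨δ, hδ, (BF_add_one_iff.1 ((S.bf δ hδ).mono (Order.add_one_le_of_lt hγδ))).1 x⟩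
  have : Nonempty X := ⟨x⟩
  choose! δ hδ y hy using hext
  refine ⟨⟨S.len + 1, S.A, fun γ => Function.update (S.e (δ γ)) S.len (x, y γ), S.lt_of_mem,
    S.not_countable, fun γ hγ => ?_⟩, ⟨Nat.le_succ _, fun γ hγ => ⟨δ γ, hδ γ hγ, fun ℓ hℓ => ?_⟩⟩,
    rfl, fun γ _ => by simp⟩
  · rw [restrict_comp_update_eq_snoc Prod.fst, restrict_comp_update_eq_snoc Prod.snd]
    exact hy γ hγ
  · exact Function.update_of_ne hℓ.ne _ _

theorem exists_refines_snd (S : Stage.{u} X) (x : X) :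
    ∃ T : Stage.{u} X, T.Refines S ∧ T.len = S.len + 1 ∧ ∀ γ ∈ T.A, (T.e γ S.len).2 = x := by
  obtain ⟨T, hTS, hlen, hx⟩ := S.swap.exists_refines_fst x
  exact ⟨T.swap, hTS.swap, hlen, hx⟩

theorem exists_refines_isSmall [SeparableSpace X] (S : Stage.{u} X) {ε : ℝ} (hε : 0 < ε) :
    ∃ T : Stage.{u} X, T.Refines S ∧ T.len = S.len ∧ T.IsSmall ε := by
  obtain ⟨A, hAS, hA, hsmall⟩ := exists_not_countable_subset_dist_le
    (fun γ (i : Fin S.len) => S.e γ i) S.not_countable hε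
  refine ⟨⟨S.len, A, S.e, fun γ hγ => S.lt_of_mem γ (hAS hγ), hA, fun γ hγ => S.bf γ (hAS hγ)⟩,
    ⟨le_rfl, fun γ hγ => ⟨γ, hAS hγ, fun _ _ => rfl⟩⟩, rfl, fun γ hγ γ' hγ' ℓ hℓ => ?_⟩
  exact (dist_le_pi_dist _ _ ⟨ℓ, hℓ⟩).trans (hsmall γ hγ γ' hγ')

theorem exists_step [SeparableSpace X] (S : Stage.{u} X) (x : X) {ε : ℝ} (hε : 0 < ε) :
    ∃ T : Stage.{u} X, T.Refines S ∧ T.len = S.len + 2 ∧ T.IsSmall ε ∧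
      ∀ γ ∈ T.A, (T.e γ S.len).1 = x ∧ (T.e γ (S.len + 1)).2 = x := by
  obtain ⟨S₁, hS₁, hlen₁, hx₁⟩ := S.exists_refines_fst x
  obtain ⟨S₂, hS₂, hlen₂, hx₂⟩ := S₁.exists_refines_snd x
  obtain ⟨T, hT, hlen, hsmall⟩ := S₂.exists_refines_isSmall hε
  have hTS₁ := hT.trans hS₂
  refine ⟨T, hTS₁.trans hS₁, by omega, hsmall, fun γ hγ => ⟨?_, ?_⟩⟩
  · exact hTS₁.mem_of_forall_mem (F := Prod.fst ⁻¹' {x}) (by omega) hx₁ γ hγ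
  · exact hT.mem_of_forall_mem (F := Prod.snd ⁻¹' {x}) (by omega) (hlen₁ ▸ hx₂) γ hγ

def base {n : ℕ} (a b : Fin n → X) (x₀ : X) (h : ∀ α : Ordinal.{u}, α < ord ℵ₁ → BF α n a b) :
    Stage.{u} X where
  len := n
  A := Iio (ord ℵ₁)
  e _ ℓ := if hℓ : ℓ < n then (a ⟨ℓ, hℓ⟩, b ⟨ℓ, hℓ⟩) else (x₀, x₀)
  lt_of_mem _ hγ := hγ
  not_countable := not_countable_Iio_ord_aleph_one
  bf γ hγ := by simpa using h γ hγ

theorem base_isSmall {n : ℕ} {a b : Fin n → X} {x₀ : X}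
    {h : ∀ α : Ordinal.{u}, α < ord ℵ₁ → BF α n a b} {ε : ℝ} (hε : 0 ≤ ε) :
    (base a b x₀ h).IsSmall ε :=
  fun _ _ _ _ _ _ => (dist_self _).trans_le hε

end Stage

structure Tower (X : Type) [MetricSpace X] where
  S : ℕ → Stage.{u} X
  ε : ℕ → ℝ
  refines : ∀ k, (S (k + 1)).Refines (S k)
  isSmall : ∀ k, (S k).IsSmall (ε k)
  tendsto_ε : Tendsto ε atTop (𝓝 0)
  exists_lt_len : ∀ ℓ, ∃ k, ℓ < (S k).len

namespace Tower

variable {X : Type} [MetricSpace X] (T : Tower.{u} X)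

theorem refines_of_le {k j : ℕ} (hkj : k ≤ j) : (T.S j).Refines (T.S k) := by
  induction j, hkj using Nat.le_induction with
  | base => exact .refl _
  | succ j _ ih => exact (T.refines j).trans ih

theorem eventually_lt_len (ℓ : ℕ) : ∀ᶠ k in atTop, ℓ < (T.S k).len := by
  obtain ⟨k, hk⟩ := T.exists_lt_len ℓ
  exact eventually_atTop.2 ⟨k, fun j hj => hk.trans_le (T.refines_of_le hj).len_le⟩

noncomputable def pt (k : ℕ) : Ordinal.{u} := (T.S k).nonempty.some

theorem pt_mem (k : ℕ) : T.pt k ∈ (T.S k).A := (T.S k).nonempty.some_mem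

theorem cauchySeq_coord (ℓ : ℕ) : CauchySeq fun k => (T.S k).e (T.pt k) ℓ := by
  refine Metric.cauchySeq_iff'.2 fun δ hδ => ?_
  obtain ⟨N, hℓ, hN⟩ :=
    ((T.eventually_lt_len ℓ).and (T.tendsto_ε.eventually (gt_mem_nhds hδ))).exists
  refine ⟨N, fun j hj => ?_⟩
  obtain ⟨β, hβ, heq⟩ := (T.refines_of_le hj).exists_eq _ (T.pt_mem j)
  rw [heq ℓ hℓ]
  exact (T.isSmall N β hβ _ (T.pt_mem N) ℓ hℓ).trans_lt hN

variable [CompleteSpace X]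

noncomputable def limit (ℓ : ℕ) : X × X :=
  (cauchySeq_tendsto_of_complete (T.cauchySeq_coord ℓ)).choose

theorem tendsto_limit (ℓ : ℕ) :
    Tendsto (fun k => (T.S k).e (T.pt k) ℓ) atTop (𝓝 (T.limit ℓ)) :=
  (cauchySeq_tendsto_of_complete (T.cauchySeq_coord ℓ)).choose_spec

theorem limit_mem_of_isClosed {F : Set (X × X)} (hF : IsClosed F) {k ℓ : ℕ}
    (hℓ : ℓ < (T.S k).len) (h : ∀ γ ∈ (T.S k).A, (T.S k).e γ ℓ ∈ F) : T.limit ℓ ∈ F :=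
  hF.mem_of_tendsto (T.tendsto_limit ℓ) (eventually_atTop.2
    ⟨k, fun j hj => (T.refines_of_le hj).mem_of_forall_mem hℓ h _ (T.pt_mem j)⟩)

theorem dist_limit_fst_eq (i j : ℕ) :
    dist (T.limit i).1 (T.limit j).1 = dist (T.limit i).2 (T.limit j).2 := by
  have hF : IsClosed {p : (X × X) × (X × X) | dist p.1.1 p.2.1 = dist p.1.2 p.2.2} :=
    isClosed_eq (by fun_prop) (by fun_prop)
  refine hF.mem_of_tendsto ((T.tendsto_limit i).prodMk_nhds (T.tendsto_limit j)) ?_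
  filter_upwards [T.eventually_lt_len i, T.eventually_lt_len j] with k hi hj
  exact ((T.S k).bf _ (T.pt_mem k)).dist_eq ⟨i, hi⟩ ⟨j, hj⟩

end Tower

theorem Tower.exists_of_BF {X : Type} [MetricSpace X] [SeparableSpace X] {n : ℕ}
    {a b : Fin n → X} (h : ∀ α : Ordinal.{u}, α < ord ℵ₁ → BF α n a b) (u : ℕ → X) :
    ∃ T : Tower.{u} X, (T.S 0).len = n ∧
      (∀ γ ∈ (T.S 0).A, ∀ i : Fin n, (T.S 0).e γ i = (a i, b i)) ∧
      ∀ k, (T.S (k + 1)).len = (T.S k).len + 2 ∧ ∀ γ ∈ (T.S (k + 1)).A,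
        ((T.S (k + 1)).e γ (T.S k).len).1 = u k ∧
        ((T.S (k + 1)).e γ ((T.S k).len + 1)).2 = u k := by
  choose step hstep using fun (S : Stage.{u} X) (k : ℕ) =>
    S.exists_step (u k) (Nat.one_div_pos_of_nat : 0 < 1 / (((k + 1 : ℕ) : ℝ) + 1))
  let S (k : ℕ) : Stage.{u} X := Nat.rec (Stage.base a b (u 0) h) (fun k S => step S k) k
  have hlen (k : ℕ) : n + k ≤ (S k).len := by
    induction k with
    | zero => exact le_rfl
    | succ k ih => rw [show (S (k + 1)).len = (S k).len + 2 from (hstep (S k) k).2.1]; omega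
  refine ⟨⟨S, fun k => 1 / ((k : ℝ) + 1), fun k => (hstep (S k) k).1, fun k => ?_,
      tendsto_one_div_add_atTop_nhds_zero_nat,
      fun ℓ => ⟨ℓ + 1, (by omega : ℓ < n + (ℓ + 1)).trans_le (hlen _)⟩⟩,
    rfl, fun γ _ i => by simp [S, Stage.base],
    fun k => ⟨(hstep (S k) k).2.1, (hstep (S k) k).2.2.2⟩⟩
  cases k with
  | zero => exact Stage.base_isSmall (by positivity)
  | succ k => exact (hstep (S k) k).2.2.1

theorem exists_isometry_comp_eq {ι X Y : Type*} [MetricSpace X] [MetricSpace Y] [CompleteSpace Y]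
    {p : ι → X} {q : ι → Y} (hpq : ∀ i j, dist (p i) (p j) = dist (q i) (q j))
    (hp : DenseRange p) : ∃ f : X → Y, Isometry f ∧ f ∘ p = q := by
  let f₀ : range p → Y := fun x => q x.2.choose
  have hf₀ : Isometry f₀ := Isometry.of_dist_eq fun x y => by
    rw [← hpq, x.2.choose_spec, y.2.choose_spec]
    rfl
  have hf₀p (i : ι) : f₀ ⟨p i, mem_range_self i⟩ = q i :=
    dist_eq_zero.1 ((hpq _ _).symm.trans (dist_eq_zero.2 (mem_range_self i).choose_spec))
  have hext (i : ι) : hp.extend f₀ (p i) = q i :=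
    (hp.extend_of_ind hf₀.uniformContinuous ⟨p i, mem_range_self i⟩).trans (hf₀p i)
  have hcont := (hp.uniformContinuous_extend hf₀.uniformContinuous).continuous
  refine ⟨hp.extend f₀, Isometry.of_dist_eq fun x y => ?_, funext hext⟩
  refine isClosed_property2 hp (p := fun x y => dist (hp.extend f₀ x) (hp.extend f₀ y) = dist x y)
    (isClosed_eq (by fun_prop) (by fun_prop)) (fun i j => ?_) x y
  rw [hext, hext, ← hpq]

theorem exists_isometryEquiv_comp_eq {ι X Y : Type*} [MetricSpace X] [MetricSpace Y]
    [CompleteSpace X] [CompleteSpace Y] {p : ι → X} {q : ι → Y}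
    (hpq : ∀ i j, dist (p i) (p j) = dist (q i) (q j)) (hp : DenseRange p) (hq : DenseRange q) :
    ∃ χ : X ≃ᵢ Y, ∀ i, χ (p i) = q i := by
  obtain ⟨f, hf, hfp⟩ := exists_isometry_comp_eq hpq hp
  have hsurj : Function.Surjective f := by
    have hclosed : IsClosed (range f) := hf.isUniformInducing.isComplete_range.isClosed
    have hdense : Dense (range f) := hq.mono (hfp ▸ range_comp_subset_range p f)
    rw [← range_eq_univ, ← hclosed.closure_eq]
    exact hdense.closure_eq
  exact ⟨⟨Equiv.ofBijective f ⟨hf.injective, hsurj⟩, hf⟩, congrFun hfp⟩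

/-- Let `X` be a Polish metric space and `ā, b̄` tuples of the same finite length `n`.
If `ā ≡_α b̄` for every countable ordinal `α`, then there is a surjective isometry of
`X` mapping `ā` onto `b̄`. -/
theorem isometry_of_BF_countable_tuples {X : Type} [MetricSpace X] [CompleteSpace X]
    [TopologicalSpace.SeparableSpace X] {n : ℕ} (a b : Fin n → X)
    (h : ∀ α : Ordinal, α < (Cardinal.aleph 1).ord → BF α n a b) :
    ∃ χ : X ≃ᵢ X, ∀ i, χ (a i) = b i := by
  rcases isEmpty_or_nonempty X with hX | hX
  · exact ⟨IsometryEquiv.refl X, fun i => isEmptyElim (a i)⟩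
  obtain ⟨u, hu⟩ := exists_dense_seq X
  obtain ⟨T, hlen, hab, hstep⟩ := Tower.exists_of_BF h u
  have hlimit (i : Fin n) : T.limit i = (a i, b i) :=
    T.limit_mem_of_isClosed isClosed_singleton (hlen ▸ i.2) fun γ hγ => hab γ hγ i
  have hfst (k : ℕ) : (T.limit (T.S k).len).1 = u k :=
    T.limit_mem_of_isClosed (isClosed_singleton.preimage continuous_fst)
      (by rw [(hstep k).1]; omega) fun γ hγ => ((hstep k).2 γ hγ).1
  have hsnd (k : ℕ) : (T.limit ((T.S k).len + 1)).2 = u k :=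
    T.limit_mem_of_isClosed (isClosed_singleton.preimage continuous_snd)
      (by rw [(hstep k).1]; omega) fun γ hγ => ((hstep k).2 γ hγ).2
  obtain ⟨χ, hχ⟩ := exists_isometryEquiv_comp_eq T.dist_limit_fst_eq
    (hu.mono (range_subset_iff.2 fun k => ⟨_, hfst k⟩))
    (hu.mono (range_subset_iff.2 fun k => ⟨_, hsnd k⟩))
  exact ⟨χ, fun i => by simpa [hlimit] using hχ i⟩
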